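/- arXiv:2302.09652 — 6 statements merged into one kernel-verified Lean document; each statement's English description precedes it below -/
import Mathlib

section
/- Let V be a finite vertex type, G a simple graph on V with a symmetric nonnegative edge-weight function W : V → V → ℝ, k ≥ 1 a natural number, and H ≤ G a subgraph. Assume that for every pair of vertices u, v with G.Adj u v but ¬H.Adj u v there exists a walk from u to v in H that has at most 2k−1 edges and every edge {x,y} of which satisfies W x y ≤ 2·(W u v). Then H is a (4k−2)-spanner of G in the following sense: for all vertices u, v and every walk p from u to v in G there exists a walk q from u to v in H such that the weight of q is at most (4k−2) times the weight of p. (This is the stretch-factor guarantee of Theorem 1 for the greedy dyadic-scale spanner algorithm.) -/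
/-
A non-`H` edge `uv` of `G` is bridged by an `H`-walk of at most `2k - 1` edges, each of weight at
most `2 W u v`, hence of weight at most `(4k - 2) W u v`; an `H`-edge bridges itself.
Concatenating these bridges along a `G`-walk gives the stretch bound.
-/

open SimpleGraph

/-- The weight of a walk: the sum of `W` over its edges (traversed darts). -/
def walkWeight {V : Type*} (W : V → V → ℝ) {G : SimpleGraph V} {u v : V}
    (p : G.Walk u v) : ℝ :=
  (p.darts.map fun d => W d.toProd.1 d.toProd.2).sum

section WalkWeight

variable {V : Type*} (W : V → V → ℝ) {G : SimpleGraph V}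

@[simp]
lemma walkWeight_nil {u : V} : walkWeight W (Walk.nil : G.Walk u u) = 0 := by
  simp [walkWeight]

@[simp]
lemma walkWeight_cons {u v w : V} (h : G.Adj u v) (p : G.Walk v w) :
    walkWeight W (Walk.cons h p) = W u v + walkWeight W p := by
  simp [walkWeight]

lemma walkWeight_append {u v w : V} (p : G.Walk u v) (q : G.Walk v w) :
    walkWeight W (p.append q) = walkWeight W p + walkWeight W q := by
  simp [walkWeight, Walk.darts_append]

lemma walkWeight_le_length_mul {u v : V} (p : G.Walk u v) {c : ℝ}
    (hp : ∀ x y : V, s(x, y) ∈ p.edges → W x y ≤ c) :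
    walkWeight W p ≤ p.length * c := by
  induction p with
  | nil => simp
  | @cons a b _ h p ih =>
    have hhead : W a b ≤ c := hp _ _ (by simp)
    have htail : walkWeight W p ≤ p.length * c := ih fun x y hxy => hp x y (by simp [hxy])
    simp only [walkWeight_cons, Walk.length_cons, Nat.cast_succ]
    linarith

lemma exists_walk_walkWeight_le_mul_of_forall_adj {H : SimpleGraph V} {C : ℝ}
    (hedge : ∀ u v : V, G.Adj u v → ∃ q : H.Walk u v, walkWeight W q ≤ C * W u v)
    {u v : V} (p : G.Walk u v) : ∃ q : H.Walk u v, walkWeight W q ≤ C * walkWeight W p := by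
  induction p with
  | nil => exact ⟨Walk.nil, by simp⟩
  | cons h p ih =>
    obtain ⟨q₁, hq₁⟩ := hedge _ _ h
    obtain ⟨q₂, hq₂⟩ := ih
    refine ⟨q₁.append q₂, ?_⟩
    rw [walkWeight_append, walkWeight_cons, mul_add]
    exact add_le_add hq₁ hq₂

end WalkWeight

theorem weighted_spanner_stretch_general {V : Type*}
    (G H : SimpleGraph V) (W : V → V → ℝ)
    (hnonneg : ∀ u v : V, 0 ≤ W u v)
    (k : ℕ) (hk : 1 ≤ k)
    (hyp : ∀ u v : V, G.Adj u v → ¬ H.Adj u v →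
      ∃ p : H.Walk u v, p.length ≤ 2 * k - 1 ∧
        ∀ x y : V, s(x, y) ∈ p.edges → W x y ≤ 2 * W u v) :
    ∀ u v : V, ∀ p : G.Walk u v, ∃ q : H.Walk u v,
      walkWeight W q ≤ ((4 * k - 2 : ℕ) : ℝ) * walkWeight W p := by
  have hstretch : ((4 * k - 2 : ℕ) : ℝ) = ((2 * k - 1 : ℕ) : ℝ) * 2 := by
    rw [show 4 * k - 2 = (2 * k - 1) * 2 by omega, Nat.cast_mul, Nat.cast_ofNat]
  have hone : (1 : ℝ) ≤ ((2 * k - 1 : ℕ) : ℝ) := by exact_mod_cast (by omega : 1 ≤ 2 * k - 1)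
  intro u v p
  refine exists_walk_walkWeight_le_mul_of_forall_adj W (fun u v huv => ?_) p
  have hw := hnonneg u v
  by_cases hH : H.Adj u v
  · refine ⟨Walk.cons hH Walk.nil, ?_⟩
    simp only [walkWeight_cons, walkWeight_nil, add_zero, hstretch]
    nlinarith
  · obtain ⟨q, hlen, hbound⟩ := hyp u v huv hH
    refine ⟨q, (walkWeight_le_length_mul W q hbound).trans ?_⟩
    rw [hstretch, mul_assoc]
    gcongr

/-- Stretch-factor guarantee of the greedy dyadic-scale `(4k-2)`-spanner (Theorem 1). -/
theorem weighted_spanner_stretch {V : Type*} [Fintype V]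
    (G H : SimpleGraph V) (W : V → V → ℝ)
    (hsymm : ∀ u v : V, W u v = W v u) (hnonneg : ∀ u v : V, 0 ≤ W u v)
    (k : ℕ) (hk : 1 ≤ k) (hHG : H ≤ G)
    (hyp : ∀ u v : V, G.Adj u v → ¬ H.Adj u v →
      ∃ p : H.Walk u v, p.length ≤ 2 * k - 1 ∧
        ∀ x y : V, s(x, y) ∈ p.edges → W x y ≤ 2 * W u v) :
    ∀ u v : V, ∀ p : G.Walk u v, ∃ q : H.Walk u v,
      walkWeight W q ≤ ((4 * k - 2 : ℕ) : ℝ) * walkWeight W p :=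
  weighted_spanner_stretch_general G H W hnonneg k hk hyp
end

section
/- Conductance preservation under spectral sparsification (Lemma 3): let V be a finite vertex type, and let w_G and w_H be weight functions on V with Laplacians L_G and L_H. Let 0 ≤ ε ≤ 1/3 and suppose that for every x : V → ℝ, (1−ε)·(x ⬝ᵥ L_G *ᵥ x) ≤ x ⬝ᵥ L_H *ᵥ x ≤ (1+ε)·(x ⬝ᵥ L_G *ᵥ x). Then for every subset S ⊆ V with vol_G(S) > 0: vol_H(S) > 0 and (1/2)·φ_G(S) ≤ φ_H(S) ≤ 2·φ_G(S), where for a weight function w, vol_w(S) = Σ_{u ∈ S} Σ_{v ∈ V} w u v, cut_w(S) = Σ_{u ∈ S} Σ_{v ∉ S} w u v, and the conductance is φ_w(S) = cut_w(S) / vol_w(S). -/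
open Matrix

/-- The Laplacian matrix of a weight function `w : V → V → ℝ`. -/
noncomputable def weightLaplacian {V : Type*} [Fintype V] [DecidableEq V]
    (w : V → V → ℝ) : Matrix V V ℝ :=
  Matrix.diagonal (fun v => ∑ u, w v u) - Matrix.of w

/-- The volume of a vertex set `S` under the weight function `w`. -/
noncomputable def volume {V : Type*} [Fintype V] (w : V → V → ℝ) (S : Finset V) : ℝ :=
  ∑ u ∈ S, ∑ v, w u v

/-- The cut weight of a vertex set `S` under the weight function `w`. -/
noncomputable def cutWeight {V : Type*} [Fintype V] [DecidableEq V]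
    (w : V → V → ℝ) (S : Finset V) : ℝ :=
  ∑ u ∈ S, ∑ v ∈ Sᶜ, w u v

/-- The conductance of a vertex set `S` under the weight function `w`. -/
noncomputable def conductance {V : Type*} [Fintype V] [DecidableEq V]
    (w : V → V → ℝ) (S : Finset V) : ℝ :=
  cutWeight w S / volume w S

/-!
The quadratic form of `L_w` at the indicator vector of `S` is `cut_w(S)`, and when `w` vanishes
on the diagonal `vol_w(S)` is the sum of the cuts of the singletons `{v}`, `v ∈ S`. Spectral
approximation therefore gives `cut_H = (1 ± ε) cut_G` and `vol_H = (1 ± ε) vol_G`, so the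
conductances differ by a factor of at most `(1 + ε) / (1 - ε)`, which is `≤ 2` for `ε ≤ 1/3`.
-/

section Laplacian

variable {V : Type*} [Fintype V] [DecidableEq V]

theorem volume_eq_cutWeight_add (w : V → V → ℝ) (S : Finset V) :
    volume w S = cutWeight w S + ∑ u ∈ S, ∑ v ∈ S, w u v := by
  rw [volume, cutWeight, ← Finset.sum_add_distrib]
  exact Finset.sum_congr rfl fun u _ => (Finset.sum_compl_add_sum S (w u)).symm

theorem dotProduct_weightLaplacian_mulVec_indicator (w : V → V → ℝ) (S : Finset V) :
    (fun u => if u ∈ S then 1 else 0) ⬝ᵥ weightLaplacian w *ᵥ (fun u => if u ∈ S then 1 else 0) =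
      cutWeight w S := by
  rw [eq_sub_of_add_eq (volume_eq_cutWeight_add w S).symm]
  simp [weightLaplacian, dotProduct, mulVec, diagonal_apply, volume, Finset.sum_ite_mem]

theorem cutWeight_nonneg {w : V → V → ℝ} (hw : ∀ u v, 0 ≤ w u v) (S : Finset V) :
    0 ≤ cutWeight w S :=
  Finset.sum_nonneg fun u _ => Finset.sum_nonneg fun v _ => hw u v

theorem volume_eq_sum_cutWeight_singleton {w : V → V → ℝ} (hw : ∀ v, w v v = 0) (S : Finset V) :
    volume w S = ∑ v ∈ S, cutWeight w {v} := by
  refine Finset.sum_congr rfl fun v _ => ?_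
  simpa [volume, hw] using volume_eq_cutWeight_add w {v}

end Laplacian

section Approximation

variable {ε a b a' b' : ℝ}

theorem half_mul_div_le_div_of_approx (hε : ε ≤ 1 / 3) (ha : 0 ≤ a) (hb : 0 < b)
    (ha' : (1 - ε) * a ≤ a') (hb' : (1 - ε) * b ≤ b' ∧ b' ≤ (1 + ε) * b) :
    1 / 2 * (a / b) ≤ a' / b' := by
  have hb'_pos : 0 < b' := by nlinarith
  rw [← mul_div_assoc, div_le_div_iff₀ hb hb'_pos]
  nlinarith [mul_nonneg ha hb.le]

theorem div_le_two_mul_div_of_approx (hε : ε ≤ 1 / 3) (ha : 0 ≤ a) (hb : 0 < b)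
    (ha' : a' ≤ (1 + ε) * a) (hb' : (1 - ε) * b ≤ b') :
    a' / b' ≤ 2 * (a / b) := by
  have hb'_pos : 0 < b' := by nlinarith
  rw [← mul_div_assoc, div_le_div_iff₀ hb'_pos hb]
  nlinarith [mul_nonneg ha hb.le]

end Approximation

section SpectralApprox

variable {V : Type*} [Fintype V] [DecidableEq V]

def IsSpectralApprox (wG wH : V → V → ℝ) (ε : ℝ) : Prop :=
  ∀ x : V → ℝ,
    (1 - ε) * (x ⬝ᵥ weightLaplacian wG *ᵥ x) ≤ x ⬝ᵥ weightLaplacian wH *ᵥ x ∧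
      x ⬝ᵥ weightLaplacian wH *ᵥ x ≤ (1 + ε) * (x ⬝ᵥ weightLaplacian wG *ᵥ x)

variable {wG wH : V → V → ℝ} {ε : ℝ}

theorem IsSpectralApprox.cutWeight_bounds (h : IsSpectralApprox wG wH ε) (S : Finset V) :
    (1 - ε) * cutWeight wG S ≤ cutWeight wH S ∧ cutWeight wH S ≤ (1 + ε) * cutWeight wG S := by
  simpa only [dotProduct_weightLaplacian_mulVec_indicator] using h fun u => if u ∈ S then 1 else 0

theorem IsSpectralApprox.volume_bounds (h : IsSpectralApprox wG wH ε) (hG : ∀ v, wG v v = 0)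
    (hH : ∀ v, wH v v = 0) (S : Finset V) :
    (1 - ε) * volume wG S ≤ volume wH S ∧ volume wH S ≤ (1 + ε) * volume wG S := by
  simp only [volume_eq_sum_cutWeight_singleton hG, volume_eq_sum_cutWeight_singleton hH,
    Finset.mul_sum]
  exact ⟨Finset.sum_le_sum fun v _ => (h.cutWeight_bounds {v}).1,
    Finset.sum_le_sum fun v _ => (h.cutWeight_bounds {v}).2⟩

end SpectralApprox

theorem conductance_preservation_general {V : Type*} [Fintype V] [DecidableEq V]
    (wG wH : V → V → ℝ)
    (hGnonneg : ∀ u v : V, 0 ≤ wG u v)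
    (hGdiag : ∀ v : V, wG v v = 0)
    (hHdiag : ∀ v : V, wH v v = 0)
    (ε : ℝ) (hε1 : ε ≤ 1 / 3)
    (happrox : ∀ x : V → ℝ,
      (1 - ε) * (x ⬝ᵥ weightLaplacian wG *ᵥ x) ≤ x ⬝ᵥ weightLaplacian wH *ᵥ x ∧
      x ⬝ᵥ weightLaplacian wH *ᵥ x ≤ (1 + ε) * (x ⬝ᵥ weightLaplacian wG *ᵥ x)) :
    ∀ S : Finset V, 0 < volume wG S →
      0 < volume wH S ∧
      (1 / 2) * conductance wG S ≤ conductance wH S ∧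
      conductance wH S ≤ 2 * conductance wG S := by
  intro S hS
  have hspec : IsSpectralApprox wG wH ε := happrox
  have hcut := hspec.cutWeight_bounds S
  have hvol := hspec.volume_bounds hGdiag hHdiag S
  have hcutG := cutWeight_nonneg hGnonneg S
  exact ⟨by nlinarith [hvol.1], half_mul_div_le_div_of_approx hε1 hcutG hS hcut.1 hvol,
    div_le_two_mul_div_of_approx hε1 hcutG hS hcut.2 hvol.1⟩

/-- Conductance preservation under spectral sparsification (Lemma 3). -/
theorem conductance_preservation {V : Type*} [Fintype V] [DecidableEq V]
    (wG wH : V → V → ℝ)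
    (hGsymm : ∀ u v : V, wG u v = wG v u) (hGnonneg : ∀ u v : V, 0 ≤ wG u v)
    (hGdiag : ∀ v : V, wG v v = 0)
    (hHsymm : ∀ u v : V, wH u v = wH v u) (hHnonneg : ∀ u v : V, 0 ≤ wH u v)
    (hHdiag : ∀ v : V, wH v v = 0)
    (ε : ℝ) (hε0 : 0 ≤ ε) (hε1 : ε ≤ 1 / 3)
    (happrox : ∀ x : V → ℝ,
      (1 - ε) * (x ⬝ᵥ weightLaplacian wG *ᵥ x) ≤ x ⬝ᵥ weightLaplacian wH *ᵥ x ∧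
      x ⬝ᵥ weightLaplacian wH *ᵥ x ≤ (1 + ε) * (x ⬝ᵥ weightLaplacian wG *ᵥ x)) :
    ∀ S : Finset V, 0 < volume wG S →
      0 < volume wH S ∧
      (1 / 2) * conductance wG S ≤ conductance wH S ∧
      conductance wH S ≤ 2 * conductance wG S :=
  conductance_preservation_general wG wH hGnonneg hGdiag hHdiag ε hε1 happrox
end

section
/- Spanner projection under graph blow-up (the core claim in the proof of Theorem 6): let V and I be types, k ≥ 1 a natural number, G a simple graph on V, and G' a simple graph on V × I such that (i) for all u, v with G.Adj u v there exist a, b : I with G'.Adj (u,a) (v,b), and (ii) for all u, v : V and a, b : I, G'.Adj (u,a) (v,b) implies u = v or G.Adj u v. Let H' ≤ G' be a subgraph with H'.edist x y ≤ (2k−1) · (G'.edist x y) for all x, y : V × I, and define the simple graph H on V by H.Adj u v ↔ (u ≠ v ∧ ∃ a b : I, H'.Adj (u,a) (v,b)). Then H ≤ G, and for all u, v : V, H.edist u v ≤ (2k−1) · (G.edist u v) in ℕ∞. -/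
/-!
Both the projection `(u, a) ↦ u` from `H'` to `H` and the identity from `G` to `H` send edges
to pairs at bounded distance, and such a map scales distances by at most that bound. Hence an
edge `uv` of `G`, lifted to an edge of `G'`, is stretched by at most `2k - 1` in `H'` and
therefore also in `H`; summing along a shortest `G`-walk gives the claim.
-/

open SimpleGraph

namespace SimpleGraph

variable {V W : Type*} {G : SimpleGraph V} {H : SimpleGraph W} {f : V → W} {c : ℕ∞}

theorem Walk.edist_map_le_mul_length
    (h : ∀ u v, G.Adj u v → H.edist (f u) (f v) ≤ c) {u v : V} (p : G.Walk u v) :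
    H.edist (f u) (f v) ≤ c * p.length := by
  induction p with
  | nil => simp [edist_self]
  | @cons u w v huw q ih =>
    calc H.edist (f u) (f v) ≤ H.edist (f u) (f w) + H.edist (f w) (f v) := H.edist_triangle
      _ ≤ c + c * q.length := add_le_add (h u w huw) ih
      _ = c * (q.cons huw).length := by rw [Walk.length_cons]; push_cast; ring

theorem edist_map_le_mul_edist (hc : c ≠ 0)
    (h : ∀ u v, G.Adj u v → H.edist (f u) (f v) ≤ c) (u v : V) :
    H.edist (f u) (f v) ≤ c * G.edist u v := by
  rcases eq_or_ne (G.edist u v) ⊤ with htop | htop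
  · simp [htop, ENat.mul_top hc]
  · obtain ⟨p, hp⟩ := exists_walk_of_edist_ne_top htop
    exact hp ▸ p.edist_map_le_mul_length h

theorem edist_map_le_edist (h : ∀ u v, G.Adj u v → f u = f v ∨ H.Adj (f u) (f v)) (u v : V) :
    H.edist (f u) (f v) ≤ G.edist u v := by
  simpa using edist_map_le_mul_edist one_ne_zero
    (fun u v huv ↦ edist_le_one_iff_adj_or_eq.2 (h u v huv).symm) u v

end SimpleGraph

/-- Spanner projection under graph blow-up (core claim in the proof of Theorem 6). -/
theorem spanner_projection_blowup {V I : Type*} (k : ℕ) (hk : 1 ≤ k)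
    (G : SimpleGraph V) (G' : SimpleGraph (V × I))
    (h1 : ∀ u v : V, G.Adj u v → ∃ a b : I, G'.Adj (u, a) (v, b))
    (h2 : ∀ (u v : V) (a b : I), G'.Adj (u, a) (v, b) → u = v ∨ G.Adj u v)
    (H' : SimpleGraph (V × I)) (hH'G' : H' ≤ G')
    (hH'span : ∀ x y : V × I,
      H'.edist x y ≤ ((2 * k - 1 : ℕ) : ℕ∞) * G'.edist x y)
    (H : SimpleGraph V)
    (hH : ∀ u v : V, H.Adj u v ↔ (u ≠ v ∧ ∃ a b : I, H'.Adj (u, a) (v, b))) :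
    H ≤ G ∧ ∀ u v : V, H.edist u v ≤ ((2 * k - 1 : ℕ) : ℕ∞) * G.edist u v := by
  refine ⟨fun u v huv ↦ ?_, ?_⟩
  · obtain ⟨hne, a, b, hab⟩ := (hH u v).1 huv
    exact (h2 u v a b (hH'G' hab)).resolve_left hne
  have hproj (x y : V × I) : H.edist x.1 y.1 ≤ H'.edist x y :=
    edist_map_le_edist (fun x y hxy ↦ or_iff_not_imp_left.2 fun hne ↦
      (hH x.1 y.1).2 ⟨hne, x.2, y.2, hxy⟩) x y
  have hstretch (u v : V) (huv : G.Adj u v) : H.edist u v ≤ ((2 * k - 1 : ℕ) : ℕ∞) := by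
    obtain ⟨a, b, hab⟩ := h1 u v huv
    calc H.edist u v ≤ H'.edist (u, a) (v, b) := hproj (u, a) (v, b)
      _ ≤ ((2 * k - 1 : ℕ) : ℕ∞) * G'.edist (u, a) (v, b) := hH'span _ _
      _ = ((2 * k - 1 : ℕ) : ℕ∞) := by rw [edist_eq_one_iff_adj.2 hab, mul_one]
  exact edist_map_le_mul_edist (f := id) (Nat.cast_ne_zero.2 (by omega)) hstretch
end

section
/- Additive surplus 2 of the distributed +2-spanner construction (the deterministic core of Theorem 10): let G be a simple graph on a finite vertex type V, H ≤ G a subgraph, D a natural number, and R a set of vertices such that: (i) for every vertex v with G.degree v ≤ D, every edge of G incident to v is an edge of H; (ii) every vertex v with G.degree v > D has a neighbor in R (some x ∈ R with G.Adj x v); and (iii) for every x ∈ R and every vertex w, H.edist x w = G.edist x w. Then for all vertices u, v: H.edist u v ≤ G.edist u v + 2 in ℕ∞. -/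
/-!
Every vertex `a` is either *covered* (all its `G`-edges lie in `H`) or adjacent to a centre `x`
from which `H` preserves all distances. Walking along a shortest `G`-path, `H` copies the edges
out of covered vertices; at the first uncovered vertex `a` it detours through its centre, which
costs `dist(a, x) + dist(x, a) ≤ 2` extra by the triangle inequality at `x`.
-/

open SimpleGraph

namespace SimpleGraph

variable {V : Type*} {G H : SimpleGraph V}

theorem edist_le_edist_add_two_of_adj_of_edist_eq {x a : V} (hxa : G.Adj x a)
    (hx : ∀ w, H.edist x w = G.edist x w) (c : V) :
    H.edist a c ≤ G.edist a c + 2 := by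
  have hax : G.edist x a = 1 := edist_eq_one_iff_adj.mpr hxa
  calc H.edist a c ≤ H.edist a x + H.edist x c := SimpleGraph.edist_triangle
    _ = G.edist x a + G.edist x c := by rw [edist_comm, hx, hx]
    _ ≤ G.edist x a + (G.edist x a + G.edist a c) := by gcongr; exact SimpleGraph.edist_triangle
    _ = G.edist a c + 2 := by rw [hax]; ring

theorem Walk.edist_le_length_add_two
    (hcover : ∀ a, (∀ b, G.Adj a b → H.Adj a b) ∨
      ∃ x, G.Adj x a ∧ ∀ w, H.edist x w = G.edist x w) :
    ∀ {u v : V} (p : G.Walk u v), H.edist u v ≤ p.length + 2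
  | _, _, .nil => by simp
  | a, c, .cons (v := b) hab q => by
    rcases hcover a with hcovered | ⟨x, hxa, hx⟩
    · calc H.edist a c ≤ H.edist a b + H.edist b c := SimpleGraph.edist_triangle
        _ ≤ 1 + (q.length + 2) :=
          add_le_add (edist_eq_one_iff_adj.mpr (hcovered b hab)).le
            (q.edist_le_length_add_two hcover)
        _ = (Walk.cons hab q).length + 2 := by push_cast [Walk.length_cons]; ring
    · calc H.edist a c ≤ G.edist a c + 2 := edist_le_edist_add_two_of_adj_of_edist_eq hxa hx c
        _ ≤ (Walk.cons hab q).length + 2 := by gcongr; exact edist_le _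

theorem edist_le_edist_add_two
    (hcover : ∀ a, (∀ b, G.Adj a b → H.Adj a b) ∨
      ∃ x, G.Adj x a ∧ ∀ w, H.edist x w = G.edist x w) (u v : V) :
    H.edist u v ≤ G.edist u v + 2 := by
  by_cases hreach : G.edist u v = ⊤
  · simp [hreach]
  · obtain ⟨p, hp⟩ := exists_walk_of_edist_ne_top hreach
    exact hp ▸ p.edist_le_length_add_two hcover

end SimpleGraph

theorem plus_two_spanner_general {V : Type*} [Fintype V]
    (G H : SimpleGraph V) [DecidableRel G.Adj]
    (D : ℕ) (R : Set V)
    (h1 : ∀ v : V, G.degree v ≤ D → ∀ u : V, G.Adj u v → H.Adj u v)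
    (h2 : ∀ v : V, D < G.degree v → ∃ x ∈ R, G.Adj x v)
    (h3 : ∀ x ∈ R, ∀ w : V, H.edist x w = G.edist x w) :
    ∀ u v : V, H.edist u v ≤ G.edist u v + 2 := by
  refine edist_le_edist_add_two fun a => ?_
  by_cases hdeg : G.degree a ≤ D
  · exact .inl fun b hab => (h1 a hdeg b hab.symm).symm
  · obtain ⟨x, hxR, hxa⟩ := h2 a (not_le.mp hdeg)
    exact .inr ⟨x, hxa, h3 x hxR⟩

/-- Additive surplus 2 of the distributed +2-spanner construction
(the deterministic core of Theorem 10). -/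
theorem plus_two_spanner {V : Type*} [Fintype V] [DecidableEq V]
    (G H : SimpleGraph V) [DecidableRel G.Adj] (hHG : H ≤ G)
    (D : ℕ) (R : Set V)
    (h1 : ∀ v : V, G.degree v ≤ D → ∀ u : V, G.Adj u v → H.Adj u v)
    (h2 : ∀ v : V, D < G.degree v → ∃ x ∈ R, G.Adj x v)
    (h3 : ∀ x ∈ R, ∀ w : V, H.edist x w = G.edist x w) :
    ∀ u v : V, H.edist u v ≤ G.edist u v + 2 :=
  plus_two_spanner_general G H D R h1 h2 h3
end

section
/- Sampling lemma (Lemma 11): let U be a nonempty finite set, t ≥ 1 a natural number, C a finite collection of subsets of U each of cardinality at least t, δ ∈ (0,1) a real number, and m a natural number with m ≥ (|U| / t) · Real.log (|C| / δ). Then the number of functions f : Fin m → U for which some set c ∈ C is disjoint from the range of f is at most δ · |U|^m. (Equivalently: if one draws m independent uniform samples from U, then with probability at least 1 − δ every set in C contains at least one sample.) -/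
/-!
A sequence of samples that misses some `c ∈ C` lies in `(cᶜ)^m` for that `c`, a set of at most
`(|U| - t)^m` sequences, so by the union bound there are at most
`|C| (|U| - t)^m ≤ |C| e^{-tm/|U|} |U|^m` bad sequences, using `1 - x ≤ e^{-x}`.
The hypothesis on `m` says exactly that `|C| e^{-tm/|U|} ≤ δ`.
-/

open Finset Real

theorem ncard_exists_forall_notMem_le {ι α : Type*} [Fintype ι] [Fintype α]
    (C : Finset (Finset α)) {t : ℕ} (hC : ∀ c ∈ C, t ≤ #c) :
    ({f : ι → α | ∃ c ∈ C, ∀ i, f i ∉ c}.ncard : ℝ) ≤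
      #C * ((Fintype.card α : ℝ) - t) ^ Fintype.card ι := by
  classical
  have hbad : {f : ι → α | ∃ c ∈ C, ∀ i, f i ∉ c} =
      ↑(C.biUnion fun c => Fintype.piFinset fun _ : ι => cᶜ) := by
    ext f
    simp
  rw [hbad, Set.ncard_coe_finset]
  calc ((C.biUnion fun c => Fintype.piFinset fun _ : ι => cᶜ).card : ℝ)
      ≤ ∑ c ∈ C, ((Fintype.card α : ℝ) - #c) ^ Fintype.card ι := by
        refine (Nat.cast_le.2 card_biUnion_le).trans_eq ?_
        push_cast [Fintype.card_piFinset, prod_const, card_compl, card_univ,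
          Nat.cast_sub (card_le_univ _)]
        rfl
    _ ≤ ∑ _c ∈ C, ((Fintype.card α : ℝ) - t) ^ Fintype.card ι := by
        gcongr with c hc
        · exact sub_nonneg.2 (by exact_mod_cast card_le_univ c)
        · exact_mod_cast hC c hc
    _ = #C * ((Fintype.card α : ℝ) - t) ^ Fintype.card ι := by
        rw [sum_const, nsmul_eq_mul]

theorem sub_pow_le_pow_mul_exp_neg {a b : ℝ} (ha : 0 < a) (hba : b ≤ a) (m : ℕ) :
    (a - b) ^ m ≤ a ^ m * exp (-(b / a * m)) := by
  calc (a - b) ^ m = a ^ m * (1 - b / a) ^ m := by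
        rw [← mul_pow, mul_sub, mul_one, mul_div_cancel₀ _ ha.ne']
    _ ≤ a ^ m * exp (-(b / a)) ^ m := by
        gcongr
        · exact sub_nonneg.2 ((div_le_one ha).2 hba)
        · exact one_sub_le_exp_neg _
    _ = a ^ m * exp (-(b / a * m)) := by
        rw [← exp_nat_mul]
        ring_nf

theorem mul_exp_neg_le_of_log_div_le {K δ x : ℝ} (hK : 0 < K) (hδ : 0 < δ)
    (h : log (K / δ) ≤ x) : K * exp (-x) ≤ δ := by
  rw [log_le_iff_le_exp (div_pos hK hδ), div_le_iff₀ hδ] at h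
  rw [exp_neg, ← div_eq_mul_inv, div_le_iff₀ (exp_pos x)]
  linarith

theorem sampling_lemma_general {U : Type*} [Fintype U]
    (t : ℕ) (ht : 1 ≤ t) (C : Finset (Finset U))
    (hC : ∀ c ∈ C, t ≤ c.card)
    (δ : ℝ) (hδ0 : 0 < δ)
    (m : ℕ)
    (hm : ((Fintype.card U : ℝ) / t) * Real.log (C.card / δ) ≤ m) :
    (({f : Fin m → U | ∃ c ∈ C, ∀ i : Fin m, f i ∉ c} : Set (Fin m → U)).ncard : ℝ) ≤
      δ * (Fintype.card U : ℝ) ^ m := by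
  obtain rfl | ⟨c₀, hc₀⟩ := C.eq_empty_or_nonempty
  · simpa using by positivity
  have ht0 : (0 : ℝ) < t := by exact_mod_cast ht
  have htn : (t : ℝ) ≤ Fintype.card U := by exact_mod_cast (hC c₀ hc₀).trans (card_le_univ c₀)
  set n : ℝ := (Fintype.card U : ℝ)
  have hn0 : 0 < n := ht0.trans_le htn
  have hlog : log (#C / δ) ≤ t / n * m := by
    simpa only [inv_div] using (le_inv_mul_iff₀ (div_pos hn0 ht0)).2 hm
  calc _ ≤ #C * (n - t) ^ m := by simpa using ncard_exists_forall_notMem_le (ι := Fin m) C hC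
    _ ≤ #C * (n ^ m * exp (-(t / n * m))) := by
        gcongr
        exact sub_pow_le_pow_mul_exp_neg hn0 htn m
    _ = #C * exp (-(t / n * m)) * n ^ m := by ring
    _ ≤ δ * n ^ m := by
        gcongr
        exact mul_exp_neg_le_of_log_div_le (by exact_mod_cast card_pos.2 ⟨c₀, hc₀⟩) hδ0 hlog

/-- Sampling lemma (Lemma 11): if one draws `m ≥ (|U|/t)·log(|C|/δ)` independent uniform
samples from `U`, then the fraction of sample sequences missing some set of `C` entirely
is at most `δ`. -/
theorem sampling_lemma {U : Type*} [Fintype U] [Nonempty U] [DecidableEq U]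
    (t : ℕ) (ht : 1 ≤ t) (C : Finset (Finset U))
    (hC : ∀ c ∈ C, t ≤ c.card)
    (δ : ℝ) (hδ0 : 0 < δ) (hδ1 : δ < 1)
    (m : ℕ)
    (hm : ((Fintype.card U : ℝ) / t) * Real.log (C.card / δ) ≤ m) :
    (({f : Fin m → U | ∃ c ∈ C, ∀ i : Fin m, f i ∉ c} : Set (Fin m → U)).ncard : ℝ) ≤
      δ * (Fintype.card U : ℝ) ^ m :=
  sampling_lemma_general t ht C hC δ hδ0 m hm
end

section
/- Size bound for graphs of large girth (used in the proofs of Theorems 1 and 2): let k ≥ 1 be a natural number and G a simple graph on a finite vertex type with n vertices such that G.girth > 2k (G contains no cycle with at most 2k edges). Then the number of edges of G satisfies (G.edgeFinset.card : ℝ) ≤ (n : ℝ)^(1 + 1/k) + n, where the exponent 1 + 1/k is a real number. -/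
/-!
If `G` had more than `t * n` edges, repeatedly deleting vertices of degree at most `t` would leave
a nonempty induced subgraph of minimum degree greater than `t`. As `G` has no cycle of length at
most `2k`, paths of length at most `k` from a fixed vertex are determined by their endpoints, and
each path of length `j < k` extends in at least `t` ways, so this subgraph has more than `t ^ k`
vertices. Taking `t = ⌈n ^ (1 / k)⌉`, so that `t ^ k ≥ n`, gives
`e ≤ ⌈n ^ (1 / k)⌉ * n ≤ n ^ (1 + 1 / k) + n`.
-/

open Finset

namespace SimpleGraph

variable {V : Type*} {G : SimpleGraph V}

namespace Walk

theorem IsPath.eq_of_length_add_length_lt_egirth {u v : V} {p q : G.Walk u v}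
    (hp : p.IsPath) (hq : q.IsPath) (hlt : ((p.length + q.length : ℕ) : ℕ∞) < G.egirth) :
    p = q := by
  by_contra hne
  obtain ⟨_, _, p', q', hp', hq', hcyc⟩ := hp.exists_isCycle_of_ne hq hne
  have hlen : (p'.append q'.reverse).length ≤ p.length + q.length := by
    simpa using add_le_add (length_le_of_isSubwalk hp') (length_le_of_isSubwalk hq')
  exact (egirth_le_length hcyc).not_gt (lt_of_le_of_lt (by exact_mod_cast hlen) hlt)

theorem IsPath.eq_penultimate_of_adj_end [DecidableEq V] {u v w : V} {p : G.Walk u v}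
    (hp : p.IsPath) (hlt : ((p.length + 1 : ℕ) : ℕ∞) < G.egirth) (hadj : G.Adj v w)
    (hw : w ∈ p.support) : w = p.penultimate := by
  rw [← snd_reverse]
  have hw' : w ∈ p.reverse.support := by simpa using hw
  have hle := p.reverse.length_takeUntil_le_length hw'
  -- `p.reverse.takeUntil w` and the edge `v w` are two paths from `v` to `w`
  have := (hp.reverse.takeUntil hw').eq_of_length_add_length_lt_egirth
    (Path.singleton hadj).isPath (lt_of_le_of_lt (by simp at hle ⊢; omega) hlt)
  grind [p.reverse.getVert_length_takeUntil hw', Path.singleton_coe, length]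

theorem IsPath.degree_sub_one_le_card_sdiff_support [G.LocallyFinite] [DecidableEq V]
    {u v : V} {p : G.Walk u v} (hp : p.IsPath) (hlt : ((p.length + 1 : ℕ) : ℕ∞) < G.egirth) :
    G.degree v - 1 ≤ #(G.neighborFinset v \ p.support.toFinset) := by
  have hinter : G.neighborFinset v ∩ p.support.toFinset ⊆ {p.penultimate} := fun w hw => by
    simp only [mem_inter, mem_neighborFinset, List.mem_toFinset] at hw
    exact mem_singleton.mpr (hp.eq_penultimate_of_adj_end hlt hw.1 hw.2)
  have := card_sdiff_add_card_inter (G.neighborFinset v) p.support.toFinset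
  have := card_le_card hinter
  rw [card_neighborFinset_eq_degree, card_singleton] at *
  omega

end Walk

variable (G) in
abbrev PathsFrom (r : V) (j : ℕ) : Type _ :=
  Σ v, {p : G.Walk r v // p.IsPath ∧ p.length = j}

variable [Fintype V] [DecidableEq V] [DecidableRel G.Adj]

theorem mul_card_pathsFrom_le_card_pathsFrom_succ {r : V} {d j : ℕ}
    (hdeg : ∀ v, d < G.degree v) (hlt : ((j + 1 : ℕ) : ℕ∞) < G.egirth) :
    d * Fintype.card (G.PathsFrom r j) ≤ Fintype.card (G.PathsFrom r (j + 1)) := by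
  let extend :
      (Σ P : G.PathsFrom r j, {w // w ∈ G.neighborFinset P.1 \ P.2.1.support.toFinset}) →
        G.PathsFrom r (j + 1) := fun ⟨⟨_, p, hp⟩, ⟨w, hw⟩⟩ =>
    have hw := mem_sdiff.mp hw
    ⟨w, p.concat ((G.mem_neighborFinset _ _).mp hw.1),
      hp.1.concat (by simpa using hw.2) _, by simp [hp.2]⟩
  have hextend : Function.Injective extend := by
    rintro ⟨⟨x, p, hp⟩, ⟨w, hw⟩⟩ ⟨⟨x', p', hp'⟩, ⟨w', hw'⟩⟩ h
    simp only [extend, Sigma.mk.injEq] at h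
    obtain ⟨rfl, h⟩ := h
    obtain ⟨rfl, rfl⟩ := Walk.concat_inj (Subtype.ext_iff.mp (eq_of_heq h))
    rfl
  calc d * Fintype.card (G.PathsFrom r j)
      ≤ ∑ P : G.PathsFrom r j, #(G.neighborFinset P.1 \ P.2.1.support.toFinset) := by
        rw [mul_comm, ← smul_eq_mul, ← Finset.card_univ, ← Finset.sum_const]
        refine sum_le_sum fun ⟨x, p, hp⟩ _ => ?_
        show d ≤ #(G.neighborFinset x \ p.support.toFinset)
        have := hp.1.degree_sub_one_le_card_sdiff_support (by rwa [hp.2])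
        have := hdeg x
        omega
    _ = _ := by simp only [Fintype.card_sigma, Fintype.card_coe]
    _ ≤ _ := Fintype.card_le_of_injective extend hextend

theorem card_pathsFrom_lt_card {r : V} {k : ℕ} (hk : 0 < k)
    (hg : ((2 * k : ℕ) : ℕ∞) < G.egirth) : Fintype.card (G.PathsFrom r k) < Fintype.card V := by
  refine Fintype.card_lt_of_injective_of_notMem Sigma.fst ?_ (b := r) ?_
  · rintro ⟨v, p, hp⟩ ⟨_, q, hq⟩ rfl
    have := hp.1.eq_of_length_add_length_lt_egirth hq.1 (by rwa [hp.2, hq.2, ← two_mul])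
    subst this
    rfl
  · rintro ⟨⟨v, p, hp⟩, hv : v = r⟩
    subst hv
    have := Walk.length_eq_zero_iff.mpr (Walk.isPath_iff_nil.mp hp.1)
    omega

theorem pow_lt_card_of_lt_degree [Nonempty V] {d k : ℕ} (hk : 0 < k)
    (hg : ((2 * k : ℕ) : ℕ∞) < G.egirth) (hdeg : ∀ v, d < G.degree v) :
    d ^ k < Fintype.card V := by
  let r : V := Classical.arbitrary V
  have hgrowth : ∀ j ≤ k, d ^ j ≤ Fintype.card (G.PathsFrom r j) := by
    intro j hj
    induction j with
    | zero => exact Fintype.card_pos_iff.mpr ⟨⟨r, .nil, .nil, rfl⟩⟩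
    | succ j ih =>
      calc d ^ (j + 1) ≤ d * Fintype.card (G.PathsFrom r j) := by
            rw [pow_succ']; exact Nat.mul_le_mul_left d (ih (by omega))
        _ ≤ _ := mul_card_pathsFrom_le_card_pathsFrom_succ hdeg
            (lt_of_le_of_lt (by exact_mod_cast (by omega : j + 1 ≤ 2 * k)) hg)
  exact (hgrowth k le_rfl).trans_lt (card_pathsFrom_lt_card hk hg)

variable (G)

open Classical in
theorem exists_induce_lt_degree_of_mul_card_support_lt {t : ℕ}
    (h : t * Fintype.card G.support < #G.edgeFinset) :
    ∃ s : Set V, s.Nonempty ∧ ∀ v : s, t < (G.induce s).degree v := by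
  induction hE : #G.edgeFinset using Nat.strong_induction_on generalizing G with
  | _ e ih =>
  by_cases hlow : ∃ v ∈ G.support, G.degree v ≤ t
  · obtain ⟨v, hv, hdeg⟩ := hlow
    have hpos := (G.degree_pos_iff_mem_support v).mpr hv
    have hE' := G.card_edgeFinset_deleteIncidenceSet v
    have hsupp := Nat.mul_le_mul_left t (G.card_support_deleteIncidenceSet hv)
    have hsupp_pos : 0 < Fintype.card G.support := Fintype.card_pos_iff.mpr ⟨⟨v, hv⟩⟩
    rw [Nat.mul_sub_one] at hsupp
    have := Nat.le_mul_of_pos_right t hsupp_pos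
    obtain ⟨s, hs, hdeg'⟩ := ih _ (by omega) (G.deleteIncidenceSet v) (by omega) rfl
    refine ⟨s, hs, fun w => (hdeg' w).trans_le (degree_le_of_le fun _ _ hadj => ?_)⟩
    exact G.deleteIncidenceSet_le v hadj
  · push Not at hlow
    obtain ⟨⟨x, y⟩, hxy⟩ := Finset.card_pos.mp (by omega : 0 < #G.edgeFinset)
    refine ⟨G.support, ⟨x, (G.mem_edgeFinset.mp hxy).mem_support_left⟩, fun w => ?_⟩
    exact (hlow w w.2).trans_eq (by convert (degree_induce_support w).symm)

theorem card_edgeFinset_le_mul_card_of_lt_egirth {k t : ℕ} (hk : 0 < k)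
    (hg : ((2 * k : ℕ) : ℕ∞) < G.egirth) (hcard : Fintype.card V ≤ t ^ k) :
    #G.edgeFinset ≤ t * Fintype.card V := by
  classical
  by_contra! hE
  obtain ⟨s, hs, hdeg⟩ := G.exists_induce_lt_degree_of_mul_card_support_lt
    (hE.trans_le' (Nat.mul_le_mul_left t (Fintype.card_subtype_le _)))
  have : Nonempty s := hs.to_subtype
  have hgs := hg.trans_le (IsContained.egirth_le ⟨Copy.induce G s⟩)
  have hlt := (pow_lt_card_of_lt_degree hk hgs hdeg).trans_le
    (Fintype.card_le_of_injective _ Subtype.val_injective)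
  exact hlt.not_ge hcard

end SimpleGraph

open SimpleGraph

/-- Size bound for graphs of girth larger than `2k`: such a graph on `n` vertices has
at most `n^{1+1/k} + n` edges. -/
theorem high_girth_size_bound {V : Type*} [Fintype V]
    (k : ℕ) (hk : 1 ≤ k) (G : SimpleGraph V)
    (h : ((2 * k : ℕ) : ℕ∞) < G.egirth) :
    (G.edgeSet.ncard : ℝ) ≤
      (Fintype.card V : ℝ) ^ ((1 : ℝ) + 1 / (k : ℝ)) + (Fintype.card V : ℝ) := by
  classical
  set n := Fintype.card V
  set x : ℝ := (n : ℝ) ^ (k : ℝ)⁻¹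
  have hx : 0 ≤ x := by positivity
  have hcard : n ≤ ⌈x⌉₊ ^ k := by
    have : (n : ℝ) ≤ (⌈x⌉₊ : ℝ) ^ k :=
      calc (n : ℝ) = x ^ k := (Real.rpow_inv_natCast_pow n.cast_nonneg (by omega)).symm
        _ ≤ _ := pow_le_pow_left₀ hx (Nat.le_ceil x) k
    exact_mod_cast this
  have hE := G.card_edgeFinset_le_mul_card_of_lt_egirth hk h hcard
  rw [← coe_edgeFinset, Set.ncard_coe_finset]
  calc (#G.edgeFinset : ℝ) ≤ ⌈x⌉₊ * n := by exact_mod_cast hE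
    _ ≤ (x + 1) * n := by gcongr; exact (Nat.ceil_lt_add_one hx).le
    _ = _ := by rw [Real.rpow_add' n.cast_nonneg (by positivity), Real.rpow_one, one_div]; ring
end
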